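/- Let (Ω, 𝒜, P) be a probability space and T a finite rooted tree with root v0 and levels α : V → ℝ≥0 satisfying the local Bonferroni condition ∑_{v' ∈ d(v)} α(v') ≤ α(v) for every non-leaf v. For each vertex v let R(v) ∈ 𝒜 be a measurable event (rejection of the hypothesis at v), let t : V → {0,1} be a labeling (truth of the hypothesis at v), and suppose P(R(v)) ≤ α(v) whenever t(v) = 1. Define the CaD rejection event: hypothesis at v is CaD-rejected on outcome ω iff R(v') holds at ω for every ancestor v' of v (including v itself). Then the probability that there exists v with t(v) = 1 whose hypothesis is CaD-rejected is at most α(v0). -/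

import Mathlib

open Function MeasureTheory
open scoped NNReal ENNReal

/-- A finite rooted tree, encoded by a parent function. The root is a fixed
point of `parent`, and iterating `parent` from any vertex reaches the root. -/
structure CaDTree (V : Type) [Fintype V] [DecidableEq V] where
  root : V
  parent : V → V
  parent_root : parent root = root
  reaches_root : ∀ v, ∃ n, parent^[n] v = root

namespace CaDTree

variable {V : Type} [Fintype V] [DecidableEq V] (T : CaDTree V)

/-- `u` is an ancestor of `v` (including `v` itself). -/
def Ancestor (u v : V) : Prop := ∃ n, T.parent^[n] v = u

/-- `u` is a proper ancestor of `v`. -/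
def ProperAncestor (u v : V) : Prop := T.Ancestor u v ∧ u ≠ v

/-- The set of (immediate) children of `v`. -/
def children (v : V) : Finset V :=
  Finset.univ.filter (fun w => T.parent w = v ∧ w ≠ T.root)

/-- A leaf is a vertex without children. -/
def IsLeaf (v : V) : Prop := T.children v = ∅

/-- Depth of a vertex: distance to the root along the parent map. -/
noncomputable def depth (v : V) : ℕ := Nat.find (T.reaches_root v)

/-- The tree is complete of depth `L`: every leaf lies at depth `L`. -/
def CompleteDepth (L : ℕ) : Prop := ∀ v, T.IsLeaf v → T.depth v = L

/-- Local Bonferroni condition for the levels `α`. -/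
def LocalBonferroni (α : V → ℝ≥0) : Prop :=
  ∀ v, ¬ T.IsLeaf v → ∑ w ∈ T.children v, α w ≤ α v

/-- The first-true set of a labeling: vertices labeled `true` all of whose
proper ancestors are labeled `false`. -/
noncomputable def firstTrue (t : V → Bool) : Finset V :=
  letI := Classical.decPred (fun v => t v = true ∧ ∀ u, T.ProperAncestor u v → t u = false)
  Finset.univ.filter (fun v => t v = true ∧ ∀ u, T.ProperAncestor u v → t u = false)

/-- An antichain: no vertex of `A` is an ancestor of another vertex of `A`. -/
def IsAntichainTree (A : Finset V) : Prop :=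
  ∀ u ∈ A, ∀ v ∈ A, u ≠ v → ¬ T.Ancestor u v

end CaDTree

/-!
Write `E v` (`cadErrorEvent`) for the event that CaD run on the subtree rooted at `v` rejects
a true hypothesis, and prove `P (E v) ≤ α v` by induction from the leaves up. Always `E v ⊆ R v`;
if the hypothesis at `v` is true this gives `P (E v) ≤ α v`. Otherwise every false rejection
below `v` happens in the subtree of some child `c`, i.e. `E v ⊆ ⋃ c, E c`, and the union bound
with the local Bonferroni condition gives `P (E v) ≤ ∑ c ∈ children v, α c ≤ α v`.
-/

namespace CaDTree

variable {V : Type} [Fintype V] [DecidableEq V] (T : CaDTree V)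

theorem ancestor_root (v : V) : T.Ancestor T.root v := T.reaches_root v

variable {T} in
theorem Ancestor.trans {u v w : V} (huv : T.Ancestor u v) (hvw : T.Ancestor v w) :
    T.Ancestor u w := by
  obtain ⟨m, rfl⟩ := huv
  obtain ⟨n, rfl⟩ := hvw
  exact ⟨m + n, iterate_add_apply _ _ _ _⟩

theorem mem_children {v c : V} : c ∈ T.children v ↔ T.parent c = v ∧ c ≠ T.root := by
  simp [children]

theorem mem_children_of_parent_eq {v c : V} (hc : T.parent c = v) (hcv : c ≠ v) :
    c ∈ T.children v :=
  T.mem_children.2 ⟨hc, fun hroot => hcv (by rw [← hc, hroot, T.parent_root])⟩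

theorem exists_child_ancestor {v w : V} (hvw : T.Ancestor v w) (hwv : w ≠ v) :
    ∃ c ∈ T.children v, T.Ancestor c w := by
  obtain ⟨n, hn⟩ := hvw
  induction n generalizing w with
  | zero => exact absurd hn hwv
  | succ n ih =>
    rw [iterate_succ_apply] at hn
    by_cases hpw : T.parent w = v
    · exact ⟨w, T.mem_children_of_parent_eq hpw hwv, 0, rfl⟩
    · obtain ⟨c, hc, hcw⟩ := ih hpw hn
      exact ⟨c, hc, hcw.trans ⟨1, rfl⟩⟩

theorem ancestor_of_mem_children {v c : V} (hc : c ∈ T.children v) : T.Ancestor v c :=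
  ⟨1, (T.mem_children.1 hc).1⟩

theorem depth_spec (v : V) : T.parent^[T.depth v] v = T.root :=
  Nat.find_spec (T.reaches_root v)

theorem depth_eq_succ_of_mem_children {v c : V} (hc : c ∈ T.children v) :
    T.depth c = T.depth v + 1 := by
  obtain ⟨hpc, hcr⟩ := T.mem_children.1 hc
  have hle : T.depth c ≤ T.depth v + 1 :=
    Nat.find_le (by rw [iterate_succ_apply, hpc]; exact T.depth_spec v)
  obtain ⟨k, hk⟩ : ∃ k, T.depth c = k + 1 :=
    Nat.exists_eq_succ_of_ne_zero fun h0 => hcr (by simpa [h0] using T.depth_spec c)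
  have hge : T.depth v ≤ k :=
    Nat.find_le (by simpa [hk, iterate_succ_apply, hpc] using T.depth_spec c)
  omega

variable {T} in
theorem LocalBonferroni.sum_children_le {α : V → ℝ≥0} (hLB : T.LocalBonferroni α) (v : V) :
    ∑ c ∈ T.children v, α c ≤ α v := by
  by_cases hleaf : T.IsLeaf v
  · simp [show T.children v = ∅ from hleaf]
  · exact hLB v hleaf

variable {Ω : Type} (R : V → Set Ω) (t : V → Bool)

def cadErrorEvent (v : V) : Set Ω :=
  {ω | ∃ w, T.Ancestor v w ∧ t w = true ∧ ∀ u, T.Ancestor v u → T.Ancestor u w → ω ∈ R u}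

theorem cadErrorEvent_root :
    T.cadErrorEvent R t T.root = {ω | ∃ v, t v = true ∧ ∀ u, T.Ancestor u v → ω ∈ R u} := by
  ext ω
  simp [cadErrorEvent, T.ancestor_root]

theorem cadErrorEvent_subset (v : V) : T.cadErrorEvent R t v ⊆ R v := by
  rintro ω ⟨w, hvw, -, hrej⟩
  exact hrej v ⟨0, rfl⟩ hvw

theorem cadErrorEvent_subset_biUnion_children {v : V} (htv : t v ≠ true) :
    T.cadErrorEvent R t v ⊆ ⋃ c ∈ T.children v, T.cadErrorEvent R t c := by
  rintro ω ⟨w, hvw, htw, hrej⟩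
  obtain ⟨c, hc, hcw⟩ := T.exists_child_ancestor hvw (by rintro rfl; exact htv htw)
  exact Set.mem_biUnion hc
    ⟨w, hcw, htw, fun u hcu huw => hrej u ((T.ancestor_of_mem_children hc).trans hcu) huw⟩

theorem measure_cadErrorEvent_le [MeasurableSpace Ω] (P : Measure Ω) {α : V → ℝ≥0}
    (hLB : T.LocalBonferroni α) (hlevel : ∀ v, t v = true → P (R v) ≤ α v) (v : V) :
    P (T.cadErrorEvent R t v) ≤ α v := by
  by_cases htv : t v = true
  · exact (measure_mono (T.cadErrorEvent_subset R t v)).trans (hlevel v htv)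
  · calc P (T.cadErrorEvent R t v)
        ≤ P (⋃ c ∈ T.children v, T.cadErrorEvent R t c) :=
          measure_mono (T.cadErrorEvent_subset_biUnion_children R t htv)
      _ ≤ ∑ c ∈ T.children v, P (T.cadErrorEvent R t c) := measure_biUnion_finset_le _ _
      _ ≤ ∑ c ∈ T.children v, (α c : ℝ≥0∞) :=
          Finset.sum_le_sum fun c hc => measure_cadErrorEvent_le P hLB hlevel c
      _ ≤ α v := mod_cast hLB.sum_children_le v
termination_by Finset.univ.sup T.depth - T.depth v
decreasing_by
  have hdepth := T.depth_eq_succ_of_mem_children hc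
  have hle := Finset.le_sup (f := T.depth) (Finset.mem_univ c)
  omega

end CaDTree

theorem cad_familywise_error_general {V : Type} [Fintype V] [DecidableEq V]
    (T : CaDTree V) (α : V → ℝ≥0) (hLB : T.LocalBonferroni α)
    {Ω : Type} [MeasurableSpace Ω] (P : Measure Ω)
    (R : V → Set Ω) (t : V → Bool)
    (hlevel : ∀ v, t v = true → P (R v) ≤ α v) :
    P {ω | ∃ v, t v = true ∧ ∀ u, T.Ancestor u v → ω ∈ R u} ≤ α T.root := by
  rw [← T.cadErrorEvent_root]
  exact T.measure_cadErrorEvent_le R t P hLB hlevel T.root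

/-- the CaD procedure controls the familywise error at level
`α(root)` under the local Bonferroni condition. -/
theorem cad_familywise_error {V : Type} [Fintype V] [DecidableEq V]
    (T : CaDTree V) (α : V → ℝ≥0) (hLB : T.LocalBonferroni α)
    {Ω : Type} [MeasurableSpace Ω] (P : Measure Ω) [IsProbabilityMeasure P]
    (R : V → Set Ω) (hR : ∀ v, MeasurableSet (R v)) (t : V → Bool)
    (hlevel : ∀ v, t v = true → P (R v) ≤ α v) :
    P {ω | ∃ v, t v = true ∧ ∀ u, T.Ancestor u v → ω ∈ R u} ≤ α T.root :=
  cad_familywise_error_general T α hLB P R t hlevel
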